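/- Let N₁ = (1−ε₁)D₁ + ε₁R_{σ₁} and N₂ = (1−ε₂)D₂ + ε₂R_{σ₂} where Dᵢ are quantum channels, σᵢ density matrices, εᵢ ∈ [0,1]. Then the tensor product N₁ ⊗ N₂ can be written as (1−ε₁ε₂)·D + ε₁ε₂·R_σ for some quantum channel D and density matrix σ. (Super-multiplicativity of the quantum Doeblin coefficient.) -/

import Mathlib

/-!
Expanding the first factor and then the second factor only in the replacer term gives
`N₁ ⊗ N₂ = (1 - ε₁) D₁ ⊗ N₂ + ε₁ (1 - ε₂) R_{σ₁} ⊗ D₂ + ε₁ ε₂ R_{σ₁ ⊗ σ₂}`.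
The first two weights add up to `1 - ε₁ ε₂`, so `D` is the normalized convex combination of the
channels `D₁ ⊗ N₂` and `R_{σ₁} ⊗ D₂`. Tensor products of CP maps are CP because the Choi matrix of
`Φ ⊗ Ψ` is a reindexing of the Kronecker product of the Choi matrices.
-/

open Matrix
open scoped ComplexOrder

noncomputable def trNorm {n : Type*} [Fintype n] [DecidableEq n] (A : Matrix n n ℂ) : ℝ :=
  ∑ i, Real.sqrt ((Matrix.isHermitian_conjTranspose_mul_self A).eigenvalues i)

noncomputable def choi {m n : Type*} [Fintype m] [DecidableEq m] [Fintype n]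
    (Φ : Matrix m m ℂ →ₗ[ℂ] Matrix n n ℂ) : Matrix (m × n) (m × n) ℂ :=
  Matrix.of fun p q => Φ (Matrix.single p.1 q.1 1) p.2 q.2

def IsCP {m n : Type*} [Fintype m] [DecidableEq m] [Fintype n]
    (Φ : Matrix m m ℂ →ₗ[ℂ] Matrix n n ℂ) : Prop := (choi Φ).PosSemidef

def IsTP {m n : Type*} [Fintype m] [Fintype n]
    (Φ : Matrix m m ℂ →ₗ[ℂ] Matrix n n ℂ) : Prop := ∀ A, (Φ A).trace = A.trace

def IsDensity {n : Type*} [Fintype n] (ρ : Matrix n n ℂ) : Prop :=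
  ρ.PosSemidef ∧ ρ.trace = 1

noncomputable def replacer {m n : Type*} [Fintype m] (σ : Matrix n n ℂ) :
    Matrix m m ℂ →ₗ[ℂ] Matrix n n ℂ where
  toFun A := A.trace • σ
  map_add' A B := by simp [Matrix.trace_add, add_smul]
  map_smul' c A := by simp [Matrix.trace_smul, smul_smul]

open scoped Kronecker

@[simp]
theorem replacer_apply {m n : Type*} [Fintype m] (σ : Matrix n n ℂ) (A : Matrix m m ℂ) :
    replacer σ A = A.trace • σ :=
  rfl

section TensorMap

variable {m m' n n' : Type*} [Fintype m] [DecidableEq m] [Fintype n] [DecidableEq n]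

noncomputable def tensorMap (Φ : Matrix m m ℂ →ₗ[ℂ] Matrix m' m' ℂ)
    (Ψ : Matrix n n ℂ →ₗ[ℂ] Matrix n' n' ℂ) :
    Matrix (m × n) (m × n) ℂ →ₗ[ℂ] Matrix (m' × n') (m' × n') ℂ :=
  Matrix.liftLinear ℂ fun p q =>
    LinearMap.toSpanSingleton ℂ _ (Φ (single p.1 q.1 1) ⊗ₖ Ψ (single p.2 q.2 1))

variable (Φ : Matrix m m ℂ →ₗ[ℂ] Matrix m' m' ℂ) (Ψ : Matrix n n ℂ →ₗ[ℂ] Matrix n' n' ℂ)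

theorem tensorMap_single (p q : m × n) (c : ℂ) :
    tensorMap Φ Ψ (single p q c) = c • (Φ (single p.1 q.1 1) ⊗ₖ Ψ (single p.2 q.2 1)) := by
  simp [tensorMap]

theorem tensorMap_kronecker (A : Matrix m m ℂ) (B : Matrix n n ℂ) :
    tensorMap Φ Ψ (A ⊗ₖ B) = Φ A ⊗ₖ Ψ B := by
  induction A using Matrix.induction_on' with
  | h_zero => simp
  | h_add A A' hA hA' => simp only [add_kronecker, map_add, hA, hA']
  | h_std_basis i j a =>
    induction B using Matrix.induction_on' with
    | h_zero => simp
    | h_add B B' hB hB' => simp only [kronecker_add, map_add, hB, hB']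
    | h_std_basis k l b =>
      have hΦ : Φ (single i j a) = a • Φ (single i j 1) := by
        rw [← map_smul, smul_single, smul_eq_mul, mul_one]
      have hΨ : Ψ (single k l b) = b • Ψ (single k l 1) := by
        rw [← map_smul, smul_single, smul_eq_mul, mul_one]
      rw [single_kronecker_single, tensorMap_single, hΦ, hΨ, smul_kronecker, kronecker_smul,
        smul_smul]

variable [Fintype m'] [Fintype n']

theorem choi_tensorMap :
    choi (tensorMap Φ Ψ) = (choi Φ ⊗ₖ choi Ψ).submatrix
      (fun p => ((p.1.1, p.2.1), (p.1.2, p.2.2))) (fun p => ((p.1.1, p.2.1), (p.1.2, p.2.2))) := by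
  ext ⟨⟨i, k⟩, i', k'⟩ ⟨⟨j, l⟩, j', l'⟩
  simp [choi, tensorMap_single]

variable {Φ Ψ}

theorem IsCP.tensorMap (hΦ : IsCP Φ) (hΨ : IsCP Ψ) : IsCP (tensorMap Φ Ψ) := by
  rw [IsCP, choi_tensorMap]
  exact (PosSemidef.kronecker hΦ hΨ).submatrix _

theorem IsTP.of_single {Φ : Matrix m m ℂ →ₗ[ℂ] Matrix m' m' ℂ}
    (h : ∀ i j, (Φ (single i j 1)).trace = (single i j (1 : ℂ)).trace) : IsTP Φ := by
  intro A
  induction A using Matrix.induction_on' with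
  | h_zero => simp
  | h_add A A' hA hA' => rw [map_add, trace_add, trace_add, hA, hA']
  | h_std_basis i j a =>
    rw [← mul_one a, ← smul_eq_mul, ← smul_single, map_smul, trace_smul, trace_smul, h]

theorem IsTP.tensorMap (hΦ : IsTP Φ) (hΨ : IsTP Ψ) : IsTP (tensorMap Φ Ψ) := by
  refine IsTP.of_single fun ⟨i, k⟩ ⟨j, l⟩ => ?_
  have hsingle : single (i, k) (j, l) (1 : ℂ) = single i j 1 ⊗ₖ single k l 1 := by
    rw [single_kronecker_single, mul_one]
  rw [hsingle, tensorMap_kronecker, trace_kronecker, trace_kronecker, hΦ, hΨ]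

end TensorMap

section Channels

variable {m n : Type*} [Fintype m] [DecidableEq m] [Fintype n]

theorem choi_add (Φ Ψ : Matrix m m ℂ →ₗ[ℂ] Matrix n n ℂ) : choi (Φ + Ψ) = choi Φ + choi Ψ := by
  ext p q
  simp [choi]

theorem choi_smul (c : ℂ) (Φ : Matrix m m ℂ →ₗ[ℂ] Matrix n n ℂ) : choi (c • Φ) = c • choi Φ := by
  ext p q
  simp [choi]

theorem IsCP.add {Φ Ψ : Matrix m m ℂ →ₗ[ℂ] Matrix n n ℂ} (hΦ : IsCP Φ) (hΨ : IsCP Ψ) :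
    IsCP (Φ + Ψ) := by
  rw [IsCP, choi_add]
  exact PosSemidef.add hΦ hΨ

theorem IsCP.ofReal_smul {Φ : Matrix m m ℂ →ₗ[ℂ] Matrix n n ℂ} (hΦ : IsCP Φ) {r : ℝ}
    (hr : 0 ≤ r) : IsCP ((r : ℂ) • Φ) := by
  rw [IsCP, choi_smul]
  exact PosSemidef.smul hΦ (Complex.zero_le_real.mpr hr)

theorem IsCP.convexComb {Φ Ψ : Matrix m m ℂ →ₗ[ℂ] Matrix n n ℂ} (hΦ : IsCP Φ) (hΨ : IsCP Ψ)
    {p : ℝ} (hp : p ∈ Set.Icc (0 : ℝ) 1) : IsCP ((p : ℂ) • Φ + (1 - (p : ℂ)) • Ψ) := by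
  have h := (hΦ.ofReal_smul hp.1).add (hΨ.ofReal_smul (sub_nonneg.mpr hp.2))
  push_cast at h
  exact h

omit [DecidableEq m] in
theorem IsTP.convexComb {Φ Ψ : Matrix m m ℂ →ₗ[ℂ] Matrix n n ℂ} (hΦ : IsTP Φ) (hΨ : IsTP Ψ)
    (p : ℂ) : IsTP (p • Φ + (1 - p) • Ψ) := by
  intro A
  simp only [LinearMap.add_apply, LinearMap.smul_apply, trace_add, trace_smul, hΦ A, hΨ A]
  ring

theorem choi_replacer [DecidableEq n] (σ : Matrix n n ℂ) :
    choi (replacer (m := m) σ) = (1 : Matrix m m ℂ) ⊗ₖ σ := by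
  ext ⟨i, k⟩ ⟨j, l⟩
  by_cases h : i = j
  · subst h
    simp [choi]
  · simp [choi, h]

theorem isCP_replacer [DecidableEq n] {σ : Matrix n n ℂ} (hσ : σ.PosSemidef) :
    IsCP (replacer (m := m) σ) := by
  rw [IsCP, choi_replacer]
  exact PosSemidef.one.kronecker hσ

omit [DecidableEq m] in
theorem isTP_replacer {σ : Matrix n n ℂ} (hσ : σ.trace = 1) : IsTP (replacer (m := m) σ) := by
  intro A
  simp [trace_smul, hσ]

end Channels

theorem IsDensity.kronecker {m n : Type*} [Fintype m] [Fintype n] {σ : Matrix m m ℂ}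
    {τ : Matrix n n ℂ} (hσ : IsDensity σ) (hτ : IsDensity τ) : IsDensity (σ ⊗ₖ τ) :=
  ⟨hσ.1.kronecker hτ.1, by rw [trace_kronecker, hσ.2, hτ.2, mul_one]⟩

-- Stated existentially because `1 - ε₁ * ε₂` may vanish (then `ε₁ = 1` and any `p` works).
theorem exists_mem_Icc_mul_eq_one_sub {ε₁ ε₂ : ℝ} (hε₁ : ε₁ ∈ Set.Icc (0 : ℝ) 1)
    (hε₂ : ε₂ ∈ Set.Icc (0 : ℝ) 1) :
    ∃ p ∈ Set.Icc (0 : ℝ) 1, (1 - ε₁ * ε₂) * p = 1 - ε₁ := by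
  obtain ⟨h₁0, h₁1⟩ := hε₁
  obtain ⟨h₂0, h₂1⟩ := hε₂
  have hle : 1 - ε₁ ≤ 1 - ε₁ * ε₂ := by nlinarith
  rcases (sub_nonneg.mpr h₁1).eq_or_lt with h | h
  · exact ⟨0, by simp, by linarith⟩
  · have hpos : 0 < 1 - ε₁ * ε₂ := h.trans_le hle
    exact ⟨(1 - ε₁) / (1 - ε₁ * ε₂), ⟨div_nonneg h.le hpos.le, div_le_one_of_le₀ hle hpos.le⟩,
      mul_div_cancel₀ _ hpos.ne'⟩

theorem stmt13_general {d₁ d₂ : ℕ}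
    (N₁ D₁ : Matrix (Fin d₁) (Fin d₁) ℂ →ₗ[ℂ] Matrix (Fin d₁) (Fin d₁) ℂ)
    (N₂ D₂ : Matrix (Fin d₂) (Fin d₂) ℂ →ₗ[ℂ] Matrix (Fin d₂) (Fin d₂) ℂ)
    (σ₁ : Matrix (Fin d₁) (Fin d₁) ℂ) (σ₂ : Matrix (Fin d₂) (Fin d₂) ℂ)
    (ε₁ ε₂ : ℝ) (hε₁ : ε₁ ∈ Set.Icc (0:ℝ) 1) (hε₂ : ε₂ ∈ Set.Icc (0:ℝ) 1)
    (hN₂cp : IsCP N₂) (hN₂tp : IsTP N₂)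
    (hD₁cp : IsCP D₁) (hD₁tp : IsTP D₁) (hD₂cp : IsCP D₂) (hD₂tp : IsTP D₂)
    (hσ₁ : IsDensity σ₁) (hσ₂ : IsDensity σ₂)
    (hdec₁ : ∀ A, N₁ A = (1 - (ε₁ : ℂ)) • D₁ A + (ε₁ : ℂ) • (A.trace • σ₁))
    (hdec₂ : ∀ B, N₂ B = (1 - (ε₂ : ℂ)) • D₂ B + (ε₂ : ℂ) • (B.trace • σ₂)) :
    ∃ (D : Matrix (Fin d₁ × Fin d₂) (Fin d₁ × Fin d₂) ℂ →ₗ[ℂ]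
            Matrix (Fin d₁ × Fin d₂) (Fin d₁ × Fin d₂) ℂ)
      (σ : Matrix (Fin d₁ × Fin d₂) (Fin d₁ × Fin d₂) ℂ),
      IsCP D ∧ IsTP D ∧ IsDensity σ ∧
      ∀ (A : Matrix (Fin d₁) (Fin d₁) ℂ) (B : Matrix (Fin d₂) (Fin d₂) ℂ),
        Matrix.kroneckerMap (· * ·) (N₁ A) (N₂ B)
          = (1 - ((ε₁ * ε₂ : ℝ) : ℂ)) • D (Matrix.kroneckerMap (· * ·) A B)
            + ((ε₁ * ε₂ : ℝ) : ℂ) • ((Matrix.kroneckerMap (· * ·) A B).trace • σ) := by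
  obtain ⟨p, hp01, hp⟩ := exists_mem_Icc_mul_eq_one_sub hε₁ hε₂
  refine ⟨(p : ℂ) • tensorMap D₁ N₂ + (1 - (p : ℂ)) • tensorMap (replacer σ₁) D₂, σ₁ ⊗ₖ σ₂,
    (hD₁cp.tensorMap hN₂cp).convexComb ((isCP_replacer hσ₁.1).tensorMap hD₂cp) hp01,
    (hD₁tp.tensorMap hN₂tp).convexComb ((isTP_replacer hσ₁.2).tensorMap hD₂tp) p,
    hσ₁.kronecker hσ₂, fun A B => ?_⟩
  have hpC : (1 - (ε₁ : ℂ) * ε₂) * p = 1 - ε₁ := by exact_mod_cast hp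
  set X := D₁ A ⊗ₖ N₂ B
  set Y := (A.trace • σ₁) ⊗ₖ D₂ B
  calc N₁ A ⊗ₖ N₂ B
      = (1 - (ε₁ : ℂ)) • X + (ε₁ : ℂ) • ((A.trace • σ₁) ⊗ₖ N₂ B) := by
        rw [hdec₁ A, add_kronecker, smul_kronecker, smul_kronecker]
    _ = (1 - (ε₁ : ℂ)) • X + ((ε₁ : ℂ) * (1 - ε₂)) • Y
          + ((ε₁ : ℂ) * ε₂) • ((A.trace * B.trace) • (σ₁ ⊗ₖ σ₂)) := by
        rw [hdec₂ B]
        simp only [Y, kronecker_add, kronecker_smul, smul_kronecker]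
        module
    _ = _ := by
        simp only [LinearMap.add_apply, LinearMap.smul_apply, tensorMap_kronecker, replacer_apply,
          trace_kronecker]
        push_cast
        linear_combination (norm := module) hpC • Y - hpC • X

theorem stmt13 {d₁ d₂ : ℕ}
    (N₁ D₁ : Matrix (Fin d₁) (Fin d₁) ℂ →ₗ[ℂ] Matrix (Fin d₁) (Fin d₁) ℂ)
    (N₂ D₂ : Matrix (Fin d₂) (Fin d₂) ℂ →ₗ[ℂ] Matrix (Fin d₂) (Fin d₂) ℂ)
    (σ₁ : Matrix (Fin d₁) (Fin d₁) ℂ) (σ₂ : Matrix (Fin d₂) (Fin d₂) ℂ)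
    (ε₁ ε₂ : ℝ) (hε₁ : ε₁ ∈ Set.Icc (0:ℝ) 1) (hε₂ : ε₂ ∈ Set.Icc (0:ℝ) 1)
    (hN₁cp : IsCP N₁) (hN₁tp : IsTP N₁) (hN₂cp : IsCP N₂) (hN₂tp : IsTP N₂)
    (hD₁cp : IsCP D₁) (hD₁tp : IsTP D₁) (hD₂cp : IsCP D₂) (hD₂tp : IsTP D₂)
    (hσ₁ : IsDensity σ₁) (hσ₂ : IsDensity σ₂)
    (hdec₁ : ∀ A, N₁ A = (1 - (ε₁ : ℂ)) • D₁ A + (ε₁ : ℂ) • (A.trace • σ₁))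
    (hdec₂ : ∀ B, N₂ B = (1 - (ε₂ : ℂ)) • D₂ B + (ε₂ : ℂ) • (B.trace • σ₂)) :
    ∃ (D : Matrix (Fin d₁ × Fin d₂) (Fin d₁ × Fin d₂) ℂ →ₗ[ℂ]
            Matrix (Fin d₁ × Fin d₂) (Fin d₁ × Fin d₂) ℂ)
      (σ : Matrix (Fin d₁ × Fin d₂) (Fin d₁ × Fin d₂) ℂ),
      IsCP D ∧ IsTP D ∧ IsDensity σ ∧
      ∀ (A : Matrix (Fin d₁) (Fin d₁) ℂ) (B : Matrix (Fin d₂) (Fin d₂) ℂ),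
        Matrix.kroneckerMap (· * ·) (N₁ A) (N₂ B)
          = (1 - ((ε₁ * ε₂ : ℝ) : ℂ)) • D (Matrix.kroneckerMap (· * ·) A B)
            + ((ε₁ * ε₂ : ℝ) : ℂ) • ((Matrix.kroneckerMap (· * ·) A B).trace • σ) :=
  stmt13_general N₁ D₁ N₂ D₂ σ₁ σ₂ ε₁ ε₂ hε₁ hε₂ hN₂cp hN₂tp hD₁cp hD₁tp hD₂cp hD₂tp hσ₁ hσ₂ hdec₁
    hdec₂
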